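/- The symmetric matrix g(y₁,y₂) = (1/(2(y₁⁴+3y₁²y₂²+y₂⁴)^(3/2))) · [[2y₁⁶+9y₁⁴y₂²+6y₁²y₂⁴+3y₂⁶, 5y₁³y₂³],[5y₁³y₂³, 3y₁⁶+6y₁⁴y₂²+9y₁²y₂⁴+2y₂⁶]] is positive definite for every (y₁,y₂) ∈ ℝ² \ {(0,0)}. -/

import Mathlib

/-!
Away from the origin, `g y₁ y₂` is a positive multiple of the symmetric matrix `M` in its
definition. The top-left entry of `M` is a positive form, and
`det M = 3 F⁸ (2y₁⁴ + y₁²y₂² + 2y₂⁴) > 0`, so `M` is positive definite by Sylvester's criterion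
in dimension two.
-/

noncomputable def g (y₁ y₂ : ℝ) : Matrix (Fin 2) (Fin 2) ℝ :=
  (1 / (2 * (y₁^4 + 3*y₁^2*y₂^2 + y₂^4) ^ ((3:ℝ)/2))) •
    !![2*y₁^6 + 9*y₁^4*y₂^2 + 6*y₁^2*y₂^4 + 3*y₂^6, 5*y₁^3*y₂^3;
       5*y₁^3*y₂^3, 3*y₁^6 + 6*y₁^4*y₂^2 + 9*y₁^2*y₂^4 + 2*y₂^6]

open Matrix

theorem Matrix.posDef_fin_two_of_pos_of_det_pos {R : Type*} [CommRing R] [LinearOrder R]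
    [IsStrictOrderedRing R] [StarRing R] [StarOrderedRing R] [TrivialStar R] {a b d : R}
    (ha : 0 < a) (hdet : 0 < a * d - b ^ 2) : (!![a, b; b, d]).PosDef := by
  rw [posDef_iff_dotProduct_mulVec]
  refine ⟨by ext i j; fin_cases i <;> fin_cases j <;> simp, fun x hx => ?_⟩
  simp only [dotProduct, mulVec, Fin.sum_univ_two, star_trivial]
  have hsq : a * (x 0 * (a * x 0 + b * x 1) + x 1 * (b * x 0 + d * x 1)) =
      (a * x 0 + b * x 1) ^ 2 + (a * d - b ^ 2) * x 1 ^ 2 := by ring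
  refine (mul_pos_iff_of_pos_left ha).mp (hsq ▸ ?_)
  rcases eq_or_ne (x 1) 0 with hx₁ | hx₁
  · have hx₀ : x 0 ≠ 0 := fun hx₀ => hx (by ext i; fin_cases i <;> simp [hx₀, hx₁])
    simp only [hx₁, mul_zero, add_zero]
    positivity
  · positivity

theorem g_numerator_det_eq (y₁ y₂ : ℝ) :
    (2*y₁^6 + 9*y₁^4*y₂^2 + 6*y₁^2*y₂^4 + 3*y₂^6) * (3*y₁^6 + 6*y₁^4*y₂^2 + 9*y₁^2*y₂^4 + 2*y₂^6)
      - (5*y₁^3*y₂^3) ^ 2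
      = 3 * (y₁^4 + 3*y₁^2*y₂^2 + y₂^4) ^ 2 * (2*y₁^4 + y₁^2*y₂^2 + 2*y₂^4) := by
  ring

theorem g_posDef (y₁ y₂ : ℝ) (h : (y₁, y₂) ≠ (0, 0)) : (g y₁ y₂).PosDef := by
  have hy : y₁ ≠ 0 ∨ y₂ ≠ 0 := by contrapose! h; simp [h]
  have hF : 0 < y₁^4 + 3*y₁^2*y₂^2 + y₂^4 := by rcases hy with hy | hy <;> positivity
  refine PosDef.smul (posDef_fin_two_of_pos_of_det_pos ?_ ?_) (by positivity)
  · rcases hy with hy | hy <;> positivity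
  · rw [g_numerator_det_eq]
    rcases hy with hy | hy <;> positivity
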